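/- Let G be a graph on n vertices containing no path on k vertices. Then for every t ≥ 2, the number of t-cliques of G satisfies N_t(G) ≤ (n/(k-1)) · C(k-1, t). -/

import Mathlib

/-!
We prove `t · N_t(G[s]) ≤ |s| · C(k-2, t-1)` for every vertex set `s` by induction on `s`;
since `(k-1) · C(k-2, t-1) = t · C(k-1, t)` this is the claim for `s = V`.
Take a longest path in `G[s]`, with ends `a` and `b`; all neighbours of `a` and `b` lie on it.
If one end has degree at most `(k-2)/2`, delete it: it lies in at most
`C((k-2)/2, t-1) ≤ C(k-2, t-1) / t` of the `t`-cliques.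
Otherwise `deg a + deg b ≥ k - 1 ≥ |path|`, so by pigeonhole some `a ~ v_{i+1}` and `b ~ v_i`,
and the path closes into a cycle on its vertex set `L`. A longest path admits no edge leaving
such a cycle, so no clique meets both `L` and `s \ L`; delete `L`, which has fewer than `k`
vertices and hence at most `C(|L|, t) ≤ |L| · C(k-2, t-1) / t` cliques of size `t`.
-/

open Finset

namespace Nat

theorem mul_choose_le_mul_choose_sub_one {m n t : ℕ} (h : m ≤ n + 1) :
    t * m.choose t ≤ m * n.choose (t - 1) := by
  obtain _ | m := m
  · cases t <;> simp
  obtain _ | t := t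
  · simp
  calc (t + 1) * (m + 1).choose (t + 1) = (m + 1) * m.choose t := by
        rw [add_one_mul_choose_eq, mul_comm]
    _ ≤ (m + 1) * n.choose t := Nat.mul_le_mul_left _ (choose_le_choose t (by omega))

theorem mul_choose_sub_one_le_choose_two_mul {a t : ℕ} (ht : 2 ≤ t) :
    t * a.choose (t - 1) ≤ (2 * a).choose (t - 1) := by
  obtain ⟨r, rfl⟩ : ∃ r, t = r + 2 := ⟨t - 2, by omega⟩
  rw [show r + 2 - 1 = r + 1 by omega]
  have hstep : (r + 1) * a.choose (r + 1) ≤ a * a.choose r := by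
    rw [mul_comm, choose_succ_right_eq, mul_comm]
    exact Nat.mul_le_mul_right _ (sub_le a r)
  have hvandermonde : a.choose (r + 1) + a * a.choose r ≤ (2 * a).choose (r + 1) := by
    rw [two_mul, add_choose_eq]
    calc a.choose (r + 1) + a * a.choose r
        = ∑ ij ∈ {(r + 1, 0), (r, 1)}, a.choose ij.1 * a.choose ij.2 := by
          rw [sum_pair (by simp)]
          simp [mul_comm]
      _ ≤ _ := sum_le_sum_of_subset (by simp [insert_subset_iff])
  linarith

end Nat

namespace List

variable {α : Type*} {R : α → α → Prop}

theorem exists_eq_append_cons_cons_of_length_le_card_add_card [DecidableEq α] {l : List α}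
    (hl : l ≠ []) {A B : Finset α} (hA : ∀ y ∈ A, y ∈ l) (hB : ∀ z ∈ B, z ∈ l)
    (hhead : ∀ y ∈ l.head?, y ∉ A) (hlast : ∀ z ∈ l.getLast?, z ∉ B)
    (hcard : l.length ≤ #A + #B) :
    ∃ l₁ l₂ z y, l = l₁ ++ z :: y :: l₂ ∧ z ∈ B ∧ y ∈ A := by
  have hidx {y} (hy : y ∈ l) : l.idxOf y < l.length := idxOf_lt_length_iff.mpr hy
  have hget {y} (hy : y ∈ l) : l[l.idxOf y]? = some y := by
    rw [getElem?_eq_getElem (hidx hy), getElem_idxOf]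
  have hidx_ne_zero {y} (hy : y ∈ A) : l.idxOf y ≠ 0 := fun h => by
    refine hhead y ?_ hy
    rw [head?_eq_getElem?, ← h, hget (hA y hy)]
    rfl
  have hidx_ne_last {z} (hz : z ∈ B) : l.idxOf z ≠ l.length - 1 := fun h => by
    refine hlast z ?_ hz
    rw [getLast?_eq_getElem?, ← h, hget (hB z hz)]
    rfl
  set A' := A.image (fun y => l.idxOf y - 1)
  set B' := B.image l.idxOf
  have hA' : A' ⊆ Finset.range (l.length - 1) := by
    simp only [A', image_subset_iff, Finset.mem_range]
    intro y hy
    have := hidx (hA y hy)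
    have := hidx_ne_zero hy
    omega
  have hB' : B' ⊆ Finset.range (l.length - 1) := by
    simp only [B', image_subset_iff, Finset.mem_range]
    intro z hz
    have := hidx (hB z hz)
    have := hidx_ne_last hz
    omega
  have hcardA : #A' = #A := card_image_of_injOn fun y hy y' hy' h => by
    have := hidx_ne_zero hy
    have := hidx_ne_zero hy'
    exact (idxOf_inj (hA y hy)).mp (by omega)
  have hcardB : #B' = #B := card_image_of_injOn fun z hz z' _ h => (idxOf_inj (hB z hz)).mp h
  obtain ⟨j, hj⟩ := inter_nonempty_of_card_lt_card_add_card hA' hB' (by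
    rw [card_range, hcardA, hcardB]
    have := length_pos_iff.mpr hl
    omega)
  simp only [A', B', mem_inter, mem_image] at hj
  obtain ⟨⟨y, hyA, rfl⟩, ⟨z, hzB, hzy⟩⟩ := hj
  have hy := hidx (hA y hyA)
  have hy0 := hidx_ne_zero hyA
  have hz : l[l.idxOf y - 1] = z := by simp only [← hzy, getElem_idxOf]
  refine ⟨l.take (l.idxOf y - 1), l.drop (l.idxOf y + 1), z, y, ?_, hzB, hyA⟩
  conv_lhs => rw [← take_append_drop (l.idxOf y - 1) l]
  rw [drop_eq_getElem_cons (by omega), hz, Nat.sub_add_cancel (by omega),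
    drop_eq_getElem_cons hy, getElem_idxOf]

theorem exists_cons_perm_isChain_of_cyclic {C : List α} (hC : C.IsChain R)
    (hwrap : ∀ x ∈ C.getLast?, ∀ y ∈ C.head?, R x y) {w : α} (hw : w ∈ C) :
    ∃ D, (w :: D).Perm C ∧ (w :: D).IsChain R := by
  obtain ⟨C₁, C₂, rfl⟩ := append_of_mem hw
  obtain ⟨h₁, h₂, -⟩ := isChain_append.mp hC
  refine ⟨C₂ ++ C₁, perm_append_comm (l₁ := w :: C₂),
    isChain_append.mpr ⟨h₂, h₁, ?_⟩⟩
  intro x hx y hy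
  refine hwrap x (by simpa [getLast?_append] using hx) y ?_
  cases C₁ with
  | nil => simp at hy
  | cons => simpa using hy

theorem isChain_append_cons_reverse [Std.Symm R] {l₁ l₂ : List α} {y z : α}
    (h : (l₁ ++ z :: y :: l₂).IsChain R) (hlast : ∀ b ∈ (y :: l₂).getLast?, R z b) :
    (l₁ ++ z :: (y :: l₂).reverse).IsChain R := by
  obtain ⟨h₁, h₂, h₁₂⟩ := isChain_append.mp h
  refine isChain_append.mpr ⟨h₁, isChain_cons.mpr ⟨?_, ?_⟩, by simpa using h₁₂⟩
  · simpa only [head?_reverse] using hlast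
  · exact isChain_reverse.mpr (h₂.tail.imp fun _ _ => Std.Symm.symm _ _)

end List

namespace SimpleGraph

variable {V : Type*} (G : SimpleGraph V)

structure IsPathIn (s : Finset V) (l : List V) : Prop where
  isChain : l.IsChain G.Adj
  nodup : l.Nodup
  subset : ∀ v ∈ l, v ∈ s

structure IsLongestPathIn (s : Finset V) (l : List V) : Prop extends G.IsPathIn s l where
  length_le : ∀ l', G.IsPathIn s l' → l'.length ≤ l.length

variable {G} {s : Finset V} {l : List V}

theorem IsPathIn.reverse (hl : G.IsPathIn s l) : G.IsPathIn s l.reverse where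
  isChain := List.isChain_reverse.mpr (hl.isChain.imp fun _ _ h => h.symm)
  nodup := List.nodup_reverse.mpr hl.nodup
  subset v hv := hl.subset v (List.mem_reverse.mp hv)

theorem IsPathIn.length_le_card [DecidableEq V] (hl : G.IsPathIn s l) : l.length ≤ #s := by
  rw [← List.toFinset_card_of_nodup hl.nodup]
  exact card_le_card fun v hv => hl.subset v (List.mem_toFinset.mp hv)

theorem exists_isLongestPathIn [DecidableEq V] (hs : s.Nonempty) :
    ∃ l, l ≠ [] ∧ G.IsLongestPathIn s l := by
  obtain ⟨x, hx⟩ := hs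
  set lengths := {m | ∃ l, G.IsPathIn s l ∧ l.length = m}
  have hbdd : BddAbove lengths := ⟨#s, by rintro _ ⟨l, hl, rfl⟩; exact hl.length_le_card⟩
  have hx : 1 ∈ lengths :=
    ⟨[x], ⟨List.isChain_singleton x, List.nodup_singleton x, by simpa using hx⟩, rfl⟩
  obtain ⟨l, hl, hlen⟩ := Nat.sSup_mem ⟨1, hx⟩ hbdd
  refine ⟨l, ?_, hl, fun l' hl' => hlen ▸ le_csSup hbdd ⟨l', hl', rfl⟩⟩
  rw [← List.length_pos_iff, hlen]
  exact le_csSup hbdd hx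

theorem IsLongestPathIn.reverse (hl : G.IsLongestPathIn s l) : G.IsLongestPathIn s l.reverse :=
  ⟨hl.toIsPathIn.reverse, by simpa using hl.length_le⟩

theorem IsLongestPathIn.mem_of_adj_head {a y : V} (hl : G.IsLongestPathIn s l)
    (ha : a ∈ l.head?) (hy : y ∈ s) (hay : G.Adj a y) : y ∈ l := by
  by_contra hyl
  have hpath : G.IsPathIn s (y :: l) :=
    ⟨List.isChain_cons.mpr ⟨fun b hb => Option.mem_unique ha hb ▸ hay.symm, hl.isChain⟩,
      List.nodup_cons.mpr ⟨hyl, hl.nodup⟩,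
      fun v hv => (List.mem_cons.mp hv).elim (· ▸ hy) (hl.subset v)⟩
  simpa using hl.length_le _ hpath

theorem IsLongestPathIn.mem_of_adj_getLast {b y : V} (hl : G.IsLongestPathIn s l)
    (hb : b ∈ l.getLast?) (hy : y ∈ s) (hby : G.Adj b y) : y ∈ l :=
  List.mem_reverse.mp (hl.reverse.mem_of_adj_head (by rwa [List.head?_reverse]) hy hby)

theorem IsLongestPathIn.mem_of_adj_of_cyclic {C : List V} {u w : V}
    (hl : G.IsLongestPathIn s l) (hC : C.Perm l) (hCchain : C.IsChain G.Adj)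
    (hwrap : ∀ x ∈ C.getLast?, ∀ y ∈ C.head?, G.Adj x y)
    (hu : u ∈ s) (hw : w ∈ l) (huw : G.Adj u w) : u ∈ l := by
  by_contra hul
  obtain ⟨D, hD, hDchain⟩ :=
    List.exists_cons_perm_isChain_of_cyclic hCchain hwrap (hC.mem_iff.mpr hw)
  have hDl := hD.trans hC
  have hpath : G.IsPathIn s (u :: w :: D) :=
    ⟨hDchain.cons_cons huw,
      List.nodup_cons.mpr ⟨fun h => hul (hDl.mem_iff.mp h), hDl.nodup_iff.mpr hl.nodup⟩,
      fun v hv => (List.mem_cons.mp hv).elim (· ▸ hu) fun h => hl.subset v (hDl.mem_iff.mp h)⟩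
  have := hl.length_le _ hpath
  rw [List.length_cons, hDl.length_eq] at this
  omega

theorem IsLongestPathIn.mem_of_adj_of_length_le_card_add_card [DecidableEq V]
    [DecidableRel G.Adj] {a b u w : V} (hl : G.IsLongestPathIn s l) (ha : a ∈ l.head?)
    (hb : b ∈ l.getLast?)
    (hcard : l.length ≤ #{y ∈ s | G.Adj a y} + #{y ∈ s | G.Adj b y})
    (hu : u ∈ s) (hw : w ∈ l) (huw : G.Adj u w) : u ∈ l := by
  have hne : l ≠ [] := by rintro rfl; simp at ha
  obtain ⟨l₁, l₂, z, y, rfl, hz, hy⟩ :=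
    List.exists_eq_append_cons_cons_of_length_le_card_add_card hne
      (fun y hy => hl.mem_of_adj_head ha (mem_filter.mp hy).1 (mem_filter.mp hy).2)
      (fun z hz => hl.mem_of_adj_getLast hb (mem_filter.mp hz).1 (mem_filter.mp hz).2)
      (fun y hy hyA => G.loopless.irrefl y (Option.mem_unique ha hy ▸ (mem_filter.mp hyA).2))
      (fun z hz hzB => G.loopless.irrefl z (Option.mem_unique hb hz ▸ (mem_filter.mp hzB).2))
      hcard
  have hay : G.Adj a y := (mem_filter.mp hy).2
  have hbz : G.Adj b z := (mem_filter.mp hz).2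
  have hb' : b ∈ (y :: l₂).getLast? := by simpa [List.getLast?_append] using hb
  refine hl.mem_of_adj_of_cyclic (C := l₁ ++ z :: (y :: l₂).reverse) ?_ ?_ ?_ hu hw huw
  · exact List.Perm.append_left _ ((List.reverse_perm _).cons z)
  · have := G.symm
    exact List.isChain_append_cons_reverse hl.isChain fun b' hb'' =>
      Option.mem_unique hb' hb'' ▸ hbz.symm
  · intro x hx a' ha'
    have hyx : y = x := by simpa [List.getLast?_append, List.getLast?_cons] using hx
    have ha'a : a' = a := Option.mem_unique (by simpa [List.head?_append] using ha') ha
    exact hyx ▸ ha'a ▸ hay.symm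

theorem exists_low_degree_or_exists_closed [DecidableEq V] [DecidableRel G.Adj] {k : ℕ}
    (hP : ∀ (u v : V) (p : G.Walk u v), p.IsPath → p.length + 1 < k) (hs : s.Nonempty) :
    (∃ v ∈ s, 2 * #{y ∈ s | G.Adj v y} + 2 ≤ k) ∨
      ∃ L ⊆ s, L.Nonempty ∧ #L < k ∧ ∀ u ∈ s, ∀ w ∈ L, G.Adj u w → u ∈ L := by
  obtain ⟨l, hne, hl⟩ := exists_isLongestPathIn (G := G) hs
  set a := l.head hne
  set b := l.getLast hne
  by_cases hda : 2 * #{y ∈ s | G.Adj a y} + 2 ≤ k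
  · exact .inl ⟨a, hl.subset a (List.head_mem hne), hda⟩
  by_cases hdb : 2 * #{y ∈ s | G.Adj b y} + 2 ≤ k
  · exact .inl ⟨b, hl.subset b (List.getLast_mem hne), hdb⟩
  have hlen : l.length < k := by
    have := hP _ _ (Walk.ofSupport l hne hl.isChain)
      ((Walk.isPath_def _).mpr (by simpa using hl.nodup))
    rw [Walk.length_ofSupport] at this
    omega
  refine .inr ⟨l.toFinset, fun v hv => hl.subset v (List.mem_toFinset.mp hv),
    ⟨a, List.mem_toFinset.mpr (List.head_mem hne)⟩,
    by rwa [List.toFinset_card_of_nodup hl.nodup], fun u hu w hw huw => ?_⟩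
  exact List.mem_toFinset.mpr <| hl.mem_of_adj_of_length_le_card_add_card (a := a) (b := b)
    (List.head?_eq_some_head hne) (List.getLast?_eq_some_getLast hne) (by omega) hu
    (List.mem_toFinset.mp hw) huw

section Cliques

variable (G) [Fintype V] [DecidableEq V] [DecidableRel G.Adj]

def cliquesIn (t : ℕ) (s : Finset V) : Finset (Finset V) :=
  {c ∈ G.cliqueFinset t | c ⊆ s}

variable {G}

theorem cliquesIn_univ (t : ℕ) : G.cliquesIn t univ = G.cliqueFinset t :=
  filter_true_of_mem fun c _ => subset_univ c

theorem card_cliquesIn_le_choose (t : ℕ) (s : Finset V) :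
    #(G.cliquesIn t s) ≤ (#s).choose t := by
  rw [← card_powersetCard]
  refine card_le_card fun c hc => ?_
  obtain ⟨hc, hcs⟩ := mem_filter.mp hc
  exact mem_powersetCard.mpr ⟨hcs, (mem_cliqueFinset_iff.mp hc).card_eq⟩

theorem card_cliquesIn_le_add_of_closed {t : ℕ} {s L : Finset V}
    (hL : ∀ u ∈ s, ∀ w ∈ L, G.Adj u w → u ∈ L) :
    #(G.cliquesIn t s) ≤ #(G.cliquesIn t L) + #(G.cliquesIn t (s \ L)) := by
  refine (card_le_card fun c hc => ?_).trans (card_union_le _ _)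
  obtain ⟨hc, hcs⟩ := mem_filter.mp hc
  by_cases hcL : ∃ w ∈ c, w ∈ L
  · obtain ⟨w, hwc, hwL⟩ := hcL
    refine mem_union_left _ (mem_filter.mpr ⟨hc, fun u hu => ?_⟩)
    by_cases huw : u = w
    · exact huw ▸ hwL
    exact hL u (hcs hu) w hwL ((mem_cliqueFinset_iff.mp hc).isClique hu hwc huw)
  · push Not at hcL
    exact mem_union_right _
      (mem_filter.mpr ⟨hc, fun u hu => mem_sdiff.mpr ⟨hcs hu, hcL u hu⟩⟩)

theorem card_cliquesIn_le_add_choose_degree {t : ℕ} {s : Finset V} (v : V) :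
    #(G.cliquesIn t s) ≤
      #(G.cliquesIn t (s.erase v)) + (#{y ∈ s | G.Adj v y}).choose (t - 1) := by
  have hsplit :
      G.cliquesIn t s ⊆ G.cliquesIn t (s.erase v) ∪ {c ∈ G.cliquesIn t s | v ∈ c} := by
    intro c hc
    by_cases hvc : v ∈ c
    · exact mem_union_right _ (mem_filter.mpr ⟨hc, hvc⟩)
    obtain ⟨hc, hcs⟩ := mem_filter.mp hc
    exact mem_union_left _ (mem_filter.mpr
      ⟨hc, fun u hu => mem_erase.mpr ⟨ne_of_mem_of_not_mem hu hvc, hcs hu⟩⟩)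
  refine (card_le_card hsplit).trans ((card_union_le _ _).trans (Nat.add_le_add_left ?_ _))
  rw [← card_powersetCard]
  refine card_le_card_of_injOn (fun c => c.erase v) (fun c hc => ?_) ?_
  · obtain ⟨hc, hvc⟩ := mem_filter.mp hc
    obtain ⟨hc, hcs⟩ := mem_filter.mp hc
    have hclique := mem_cliqueFinset_iff.mp hc
    refine mem_powersetCard.mpr
      ⟨fun y hy => mem_filter.mpr ⟨hcs (mem_of_mem_erase hy), ?_⟩, ?_⟩
    · exact hclique.isClique hvc (mem_of_mem_erase hy) (ne_of_mem_erase hy).symm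
    · rw [card_erase_of_mem hvc, hclique.card_eq]
  · intro c₁ hc₁ c₂ hc₂ h
    rw [← insert_erase (mem_filter.mp hc₁).2, ← insert_erase (mem_filter.mp hc₂).2]
    exact congrArg (insert v) h

end Cliques

theorem card_cliquesIn_mul_le [Fintype V] [DecidableEq V] [DecidableRel G.Adj] {k t : ℕ}
    (hP : ∀ (u v : V) (p : G.Walk u v), p.IsPath → p.length + 1 < k) (ht : 2 ≤ t)
    (s : Finset V) : t * #(G.cliquesIn t s) ≤ #s * (k - 2).choose (t - 1) := by
  induction s using Finset.strongInduction with | H s ih =>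
  rcases s.eq_empty_or_nonempty with rfl | hs
  · have := card_cliquesIn_le_choose (G := G) t ∅
    simp_all [Nat.choose_eq_zero_of_lt (by omega : 0 < t)]
  rcases exists_low_degree_or_exists_closed hP hs with
    ⟨v, hv, hdeg⟩ | ⟨L, hLs, hL, hLk, hclosed⟩
  · calc t * #(G.cliquesIn t s)
        ≤ t * #(G.cliquesIn t (s.erase v)) + t * (#{y ∈ s | G.Adj v y}).choose (t - 1) := by
          rw [← mul_add]
          exact Nat.mul_le_mul_left t (card_cliquesIn_le_add_choose_degree v)
      _ ≤ #(s.erase v) * (k - 2).choose (t - 1) + (k - 2).choose (t - 1) :=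
          add_le_add (ih _ (erase_ssubset hv)) <|
            (Nat.mul_choose_sub_one_le_choose_two_mul ht).trans (Nat.choose_le_choose _ (by omega))
      _ = #s * (k - 2).choose (t - 1) := by rw [← card_erase_add_one hv, add_one_mul]
  · calc t * #(G.cliquesIn t s) ≤ t * #(G.cliquesIn t L) + t * #(G.cliquesIn t (s \ L)) := by
          rw [← mul_add]
          exact Nat.mul_le_mul_left t (card_cliquesIn_le_add_of_closed hclosed)
      _ ≤ #L * (k - 2).choose (t - 1) + #(s \ L) * (k - 2).choose (t - 1) :=
          add_le_add ((Nat.mul_le_mul_left t (card_cliquesIn_le_choose t L)).trans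
            (Nat.mul_choose_le_mul_choose_sub_one (by omega))) (ih _ (sdiff_ssubset hLs hL))
      _ = #s * (k - 2).choose (t - 1) := by
          rw [← add_mul, add_comm, card_sdiff_add_card_eq_card hLs]

theorem card_cliqueFinset_mul_le [Fintype V] [DecidableEq V] [DecidableRel G.Adj] {k t : ℕ}
    (hP : ∀ (u v : V) (p : G.Walk u v), p.IsPath → p.length + 1 < k) (ht : 2 ≤ t) :
    #(G.cliqueFinset t) * (k - 1) ≤ Fintype.card V * (k - 1).choose t := by
  rcases Nat.lt_or_ge k 2 with hk | hk
  · simp [show k - 1 = 0 by omega]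
  have hcount := card_cliquesIn_mul_le hP ht univ
  rw [cliquesIn_univ, card_univ] at hcount
  have hpascal : (k - 1) * (k - 2).choose (t - 1) = (k - 1).choose t * t := by
    have := Nat.add_one_mul_choose_eq (k - 2) (t - 1)
    rwa [show k - 2 + 1 = k - 1 by omega, show t - 1 + 1 = t by omega] at this
  refine Nat.le_of_mul_le_mul_left ?_ (by omega : 0 < t)
  calc t * (#(G.cliqueFinset t) * (k - 1))
      ≤ Fintype.card V * (k - 2).choose (t - 1) * (k - 1) := by
        rw [← mul_assoc]
        exact Nat.mul_le_mul_right _ hcount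
    _ = t * (Fintype.card V * (k - 1).choose t) := by
        rw [mul_assoc, mul_comm _ (k - 1), hpascal]
        ring

end SimpleGraph

open SimpleGraph in
/-- Luo: if `G` is an `n`-vertex graph containing no path on `k` vertices,
then for every `t ≥ 2`, `N_t(G) ≤ n/(k-1) · C(k-1, t)`. -/
theorem luo_cliques_paths (n k t : ℕ) (ht : 2 ≤ t)
    (G : SimpleGraph (Fin n)) [DecidableRel G.Adj]
    (hPfree : ∀ (u v : Fin n) (p : G.Walk u v), p.IsPath → p.length + 1 < k) :
    ((G.cliqueFinset t).card : ℝ) ≤ (n : ℝ) / (k - 1) * (k - 1).choose t := by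
  rcases Nat.eq_zero_or_pos n with rfl | hn
  · rw [cliqueFinset_eq_empty_iff.mpr (cliqueFree_of_card_lt (by rw [Fintype.card_fin]; omega))]
    simp
  have hk : 2 ≤ k := hPfree ⟨0, hn⟩ _ .nil .nil
  have hnat := card_cliqueFinset_mul_le hPfree ht
  rw [Fintype.card_fin] at hnat
  have hk1 : ((k - 1 : ℕ) : ℝ) = (k : ℝ) - 1 := by
    rw [Nat.cast_sub (by omega : 1 ≤ k), Nat.cast_one]
  rw [div_mul_eq_mul_div, le_div_iff₀ (by rw [← hk1]; exact_mod_cast (by omega : 0 < k - 1)),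
    ← hk1]
  exact_mod_cast hnat
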